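/- Let G be an ordered context-free grammar and let t be the ≺_G-least parse tree of a string w. Then t contains no cycle: there do not exist contexts c, c', c'' with c'≠□ such that t=c⟦c'⟦c''⟧⟧, the roots of c' and c'' carry the same nonterminal label, and c⟦c''⟧ is also a parse tree of w. (If such a decomposition existed, either c⟦c''⟧ would be a smaller parse tree of w, or repeatedly inserting the context c' would yield an infinite strictly ≺_G-decreasing sequence of parse trees of w.) -/
import Mathlib



namespace Ocfg

/-- A symbol: nonterminal or terminal. -/
inductive Sym (N T : Type) : Type
  | nt : N → Sym N T
  | tm : T → Sym N T

/-- An (ordered) context-free grammar: each nonterminal has an ordered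
list of right-hand sides; `start` is the start nonterminal. -/
structure OCFG (N T : Type) : Type where
  prods : N → List (List (Sym N T))
  start : N

/-- Ordered ranked trees used as parse trees: terminal leaves, ε-leaves,
and internal nodes labelled by a nonterminal together with the index of
the rule applied there. -/
inductive PTree (N T : Type) : Type
  | leaf : T → PTree N T
  | eps  : PTree N T
  | node : N → ℕ → List (PTree N T) → PTree N T

mutual
/-- `ParseFrom G A w t`: `t` is a parse tree with root nonterminal `A`
and yield `w`. -/
inductive ParseFrom {N T : Type} (G : OCFG N T) : N → List T → PTree N T → Prop
  | epsNode (A : N) (i : ℕ) :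
      (G.prods A)[i]? = some [] →
      ParseFrom G A [] (PTree.node A i [PTree.eps])
  | node (A : N) (i : ℕ) (r : List (Sym N T)) (w : List T) (cs : List (PTree N T)) :
      (G.prods A)[i]? = some r → r ≠ [] → ParseSeq G r w cs →
      ParseFrom G A w (PTree.node A i cs)

/-- `ParseSeq G r w cs`: the trees `cs` match, in order, the symbols of `r`,
with concatenated yield `w`. -/
inductive ParseSeq {N T : Type} (G : OCFG N T) : List (Sym N T) → List T → List (PTree N T) → Prop
  | nil : ParseSeq G [] [] []
  | consTm (a : T) (r : List (Sym N T)) (w : List T) (cs : List (PTree N T)) :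
      ParseSeq G r w cs →
      ParseSeq G (Sym.tm a :: r) (a :: w) (PTree.leaf a :: cs)
  | consNt (A : N) (t : PTree N T) (wA : List T) (r : List (Sym N T)) (w : List T)
      (cs : List (PTree N T)) :
      ParseFrom G A wA t → ParseSeq G r w cs →
      ParseSeq G (Sym.nt A :: r) (wA ++ w) (t :: cs)
end

/-- The set `P_G(w)` of parse trees of `w`. -/
def parseTrees {N T : Type} (G : OCFG N T) (w : List T) : Set (PTree N T) :=
  {t | ParseFrom G G.start w t}

/-- `n(t)`: the sequence of rule indices of `t`, in pre-order. -/
def PTree.idxSeq {N T : Type} : PTree N T → List ℕ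
  | .leaf _ => []
  | .eps => []
  | .node _ i cs => i :: (cs.attach.map (fun c => PTree.idxSeq c.1)).flatten
decreasing_by
  have := List.sizeOf_lt_of_mem c.2
  simp_wf
  omega

/-- The order `≺_G` on parse trees: lexicographic comparison of the
pre-order rule-index sequences. -/
def treeLT {N T : Type} (t₁ t₂ : PTree N T) : Prop :=
  List.Lex (· < ·) t₁.idxSeq t₂.idxSeq

/-- One-step derivation relation `⇒` of the underlying CFG. -/
def OCFG.Step {N T : Type} (G : OCFG N T) (u v : List (Sym N T)) : Prop :=
  ∃ (u₁ u₂ : List (Sym N T)) (A : N) (r : List (Sym N T)),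
    r ∈ G.prods A ∧ u = u₁ ++ Sym.nt A :: u₂ ∧ v = u₁ ++ r ++ u₂

/-- `⇒*`. -/
def OCFG.Derives {N T : Type} (G : OCFG N T) : List (Sym N T) → List (Sym N T) → Prop :=
  Relation.ReflTransGen G.Step

/-- A nonterminal is useful if it occurs in some sentential form derivable from
the start symbol and derives some terminal string. -/
def Useful {N T : Type} (G : OCFG N T) (A : N) : Prop :=
  (∃ u₁ u₂ : List (Sym N T), G.Derives [Sym.nt G.start] (u₁ ++ Sym.nt A :: u₂)) ∧
  (∃ w : List T, G.Derives [Sym.nt A] (w.map Sym.tm))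

/-- `G` is cyclic if `A ⇒⁺ A` for some nonterminal `A`. -/
def Cyclic {N T : Type} (G : OCFG N T) : Prop :=
  ∃ A : N, Relation.TransGen G.Step [Sym.nt A] [Sym.nt A]

/-- `G` has no ε-rules. -/
def NoEpsRules {N T : Type} (G : OCFG N T) : Prop :=
  ∀ (A : N) (r : List (Sym N T)), r ∈ G.prods A → r ≠ []

/-- A unit-rule step: `A → B` is a rule of `G`. -/
def UnitStep {N T : Type} (G : OCFG N T) (A B : N) : Prop :=
  [Sym.nt B] ∈ G.prods A

/-- `G` has a cycle of unit rules. -/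
def HasUnitCycle {N T : Type} (G : OCFG N T) : Prop :=
  ∃ A : N, Relation.TransGen (UnitStep G) A A

/-- `G` is well-ordered: for every string `w`, every nonempty subset of
`P_G(w)` has a `≺_G`-least element. -/
def WellOrderedG {N T : Type} (G : OCFG N T) : Prop :=
  ∀ (w : List T) (Φ : Set (PTree N T)), Φ ⊆ parseTrees G w → Φ.Nonempty →
    ∃ t ∈ Φ, ∀ t' ∈ Φ, t = t' ∨ treeLT t t'

/-- `t` is the `≺_G`-least parse tree of `w`. -/
def IsLeastTree {N T : Type} (G : OCFG N T) (w : List T) (t : PTree N T) : Prop :=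
  ParseFrom G G.start w t ∧ ∀ t', ParseFrom G G.start w t' → t = t' ∨ treeLT t t'

/-- `G` has least parse trees. -/
def HasLeastTrees {N T : Type} (G : OCFG N T) : Prop :=
  ∀ w : List T, (parseTrees G w).Nonempty → ∃ t, IsLeastTree G w t

/-- Derivations of a given length (number of steps). -/
inductive DerivesIn {N T : Type} (G : OCFG N T) : List (Sym N T) → List (Sym N T) → ℕ → Prop
  | refl (u : List (Sym N T)) : DerivesIn G u u 0
  | step (u v w : List (Sym N T)) (n : ℕ) :
      G.Step u v → DerivesIn G v w n → DerivesIn G u w (n + 1)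

/-- Number of rule applications in a parse tree (= length of the
corresponding leftmost derivation). -/
def PTree.numRules {N T : Type} : PTree N T → ℕ
  | .leaf _ => 0
  | .eps => 0
  | .node _ _ cs => 1 + ((cs.attach.map (fun c => PTree.numRules c.1)).foldr (· + ·) 0)
decreasing_by
  have := List.sizeOf_lt_of_mem c.2
  simp_wf
  omega

/-- Height of a tree: a single leaf has height 0. -/
def PTree.height {N T : Type} : PTree N T → ℕ
  | .leaf _ => 0
  | .eps => 0
  | .node _ _ cs => 1 + ((cs.attach.map (fun c => PTree.height c.1)).foldr max 0)
decreasing_by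
  have := List.sizeOf_lt_of_mem c.2
  simp_wf
  omega

/-- The language of `G`. -/
def langOf {N T : Type} (G : OCFG N T) : Language T :=
  {w | ∃ t, ParseFrom G G.start w t}

end Ocfg

namespace Ocfg

/-- One-hole contexts over parse trees: a context is either the hole `□`
or a node whose children are trees except for one context child. -/
inductive PCtx (N T : Type) : Type
  | hole : PCtx N T
  | node : N → ℕ → List (PTree N T) → PCtx N T → List (PTree N T) → PCtx N T

/-- `c⟦t⟧`: plug the tree `t` into the hole of the context `c`. -/
def PCtx.plug {N T : Type} : PCtx N T → PTree N T → PTree N T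
  | .hole, t => t
  | .node A i l c r, t => PTree.node A i (l ++ c.plug t :: r)

/-- The nonterminal labelling the root of a context (none for the hole). -/
def PCtx.rootNT {N T : Type} : PCtx N T → Option N
  | .hole => none
  | .node A _ _ _ _ => some A

/-- The nonterminal labelling the root of a tree (none for leaves). -/
def PTree.rootNT {N T : Type} : PTree N T → Option N
  | .leaf _ => none
  | .eps => none
  | .node A _ _ => some A

end Ocfg
open Ocfg

namespace Ocfg
variable {N T : Type}

@[simp] lemma idxSeq_node (A : N) (i : ℕ) (cs : List (PTree N T)) :
    (PTree.node A i cs).idxSeq = i :: (cs.map PTree.idxSeq).flatten := by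
  rw [PTree.idxSeq]
  simp

@[simp] lemma idxSeq_leaf (a : T) : (PTree.leaf a : PTree N T).idxSeq = [] := by rw [PTree.idxSeq]
@[simp] lemma idxSeq_eps : (PTree.eps : PTree N T).idxSeq = [] := by rw [PTree.idxSeq]

end Ocfg

namespace Ocfg
variable {N T : Type}

lemma no_parse_eps {G : OCFG N T} {A w} (h : ParseFrom G A w (PTree.eps : PTree N T)) : False := by
  cases h

lemma no_parse_leaf {G : OCFG N T} {A w a} (h : ParseFrom G A w (PTree.leaf a : PTree N T)) : False := by
  cases h

lemma root_of_parse {G : OCFG N T} {A w x} (h : ParseFrom G A w x) : x.rootNT = some A := by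
  cases h <;> rfl

lemma det_aux (G : OCFG N T) : ∀ n : ℕ,
    (∀ (x : PTree N T) A w A' w', sizeOf x ≤ n → ParseFrom G A w x → ParseFrom G A' w' x → w = w') ∧
    (∀ (cs : List (PTree N T)) r w r' w', sizeOf cs ≤ n → ParseSeq G r w cs → ParseSeq G r' w' cs → w = w') := by
  intro n
  induction n using Nat.strong_induction_on with
  | _ n ih =>
    constructor
    · intro x A w A' w' hs h1 h2
      cases h1 with
      | epsNode A i hi =>
        cases h2 with
        | epsNode => rfl
        | node A' i' r' w' cs' hi' hne hseq =>
          -- cs' = [PTree.eps]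
          cases hseq with
          | consNt A'' t wA r'' w'' cs'' hp _ => exact absurd hp no_parse_eps
      | node A i r w cs hi hne hseq =>
        cases h2 with
        | epsNode A' i' hi' =>
          cases hseq with
          | consNt A'' t wA r'' w'' cs'' hp _ => exact absurd hp no_parse_eps
        | node A' i' r' w' cs' hi' hne' hseq' =>
          have hlt : sizeOf cs < n := by
            have : sizeOf cs < sizeOf (PTree.node A i cs) := by simp <;> omega
            omega
          exact (ih (sizeOf cs) hlt).2 cs r w r' w' le_rfl hseq hseq'
    · intro cs r w r' w' hs h1 h2
      cases h1 with
      | nil => cases h2 with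
        | nil => rfl
      | consTm a r w cs hseq =>
        cases h2 with
        | consTm a' r' w' cs' hseq' =>
          have hlt : sizeOf cs < n := by
            have : sizeOf cs < sizeOf (PTree.leaf a :: cs : List (PTree N T)) := by simp <;> omega
            omega
          have := (ih (sizeOf cs) hlt).2 cs r w r' w' le_rfl hseq hseq'
          rw [this]
        | consNt A t wA r' w' cs' hp _ => exact absurd hp no_parse_leaf
      | consNt A t wA r w cs hp hseq =>
        cases h2 with
        | consTm a' r' w' cs' hseq' => exact absurd hp no_parse_leaf
        | consNt A' t' wA' r' w' cs' hp' hseq' =>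
          have hlt1 : sizeOf t < n := by
            have : sizeOf t < sizeOf (t :: cs) := by simp <;> omega
            omega
          have hlt2 : sizeOf cs < n := by
            have : sizeOf cs < sizeOf (t :: cs) := by simp <;> omega
            omega
          have e1 := (ih (sizeOf t) hlt1).1 t A wA A' wA' le_rfl hp hp'
          have e2 := (ih (sizeOf cs) hlt2).2 cs r w r' w' le_rfl hseq hseq'
          rw [e1, e2]

lemma parse_det {G : OCFG N T} {x : PTree N T} {A w A' w'}
    (h1 : ParseFrom G A w x) (h2 : ParseFrom G A' w' x) : w = w' :=
  (det_aux G (sizeOf x)).1 x A w A' w' le_rfl h1 h2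

lemma seq_det {G : OCFG N T} {cs : List (PTree N T)} {r w r' w'}
    (h1 : ParseSeq G r w cs) (h2 : ParseSeq G r' w' cs) : w = w' :=
  (det_aux G (sizeOf cs)).2 cs r w r' w' le_rfl h1 h2

end Ocfg

namespace Ocfg
variable {N T : Type}

/-- flattened index sequences of a list of trees -/
def flatSeq (cs : List (PTree N T)) : List ℕ := (cs.map PTree.idxSeq).flatten

lemma prefix_det_aux (G : OCFG N T) : ∀ n : ℕ,
    (∀ (x : PTree N T) A w y w' z1 z2, sizeOf x ≤ n → ParseFrom G A w x → ParseFrom G A w' y →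
      x.idxSeq ++ z1 = y.idxSeq ++ z2 → x.idxSeq = y.idxSeq) ∧
    (∀ (cs : List (PTree N T)) r w ds w' z1 z2, sizeOf cs ≤ n → ParseSeq G r w cs → ParseSeq G r w' ds →
      flatSeq cs ++ z1 = flatSeq ds ++ z2 → flatSeq cs = flatSeq ds) := by
  intro n
  induction n using Nat.strong_induction_on with
  | _ n ih =>
    constructor
    · intro x A w y w' z1 z2 hs h1 h2 heq
      cases h1 with
      | epsNode A i hi =>
        cases h2 with
        | epsNode A j hj =>
          simp [flatSeq] at heq ⊢
          omega
        | node A j r' wy cs' hj hne hseq =>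
          simp [flatSeq] at heq ⊢
          obtain ⟨hij, -⟩ := heq
          subst hij
          rw [hi] at hj
          cases hj
          exact absurd rfl hne
      | node A i r wx cs hi hne hseq =>
        cases h2 with
        | epsNode A j hj =>
          simp [flatSeq] at heq ⊢
          obtain ⟨hij, -⟩ := heq
          subst hij
          rw [hi] at hj
          cases hj
          exact absurd rfl hne
        | node A j r' wy cs' hj hne' hseq' =>
          simp at heq ⊢
          obtain ⟨hij, htail⟩ := heq
          subst hij
          rw [hi] at hj
          cases hj
          have hlt : sizeOf cs < n := by
            have : sizeOf cs < sizeOf (PTree.node A i cs) := by simp <;> omega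
            omega
          refine ⟨rfl, ?_⟩
          have := (ih (sizeOf cs) hlt).2 cs r w cs' w' z1 z2 le_rfl hseq hseq'
            (by simpa [flatSeq] using htail)
          simpa [flatSeq] using this
    · intro cs r w ds w' z1 z2 hs h1 h2 heq
      cases h1 with
      | nil =>
        cases h2 with
        | nil => rfl
      | consTm a r0 w0 cs0 hseq =>
        cases h2
        rename_i w' ds0 hseq'
        ·
          have hlt : sizeOf cs0 < n := by
            have : sizeOf cs0 < sizeOf (PTree.leaf a :: cs0 : List (PTree N T)) := by simp <;> omega
            omega
          have := (ih (sizeOf cs0) hlt).2 cs0 r0 w0 _ _ z1 z2 le_rfl hseq hseq'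
            (by simpa [flatSeq] using heq)
          simpa [flatSeq] using this
      | consNt A t wA r0 w0 cs0 hp hseq =>
        cases h2 with
        | consNt A' t' wA' r0' w0' ds0 hp' hseq' =>
          have hlt1 : sizeOf t < n := by
            have : sizeOf t < sizeOf (t :: cs0) := by simp <;> omega
            omega
          have hlt2 : sizeOf cs0 < n := by
            have : sizeOf cs0 < sizeOf (t :: cs0) := by simp <;> omega
            omega
          have e1 : t.idxSeq = t'.idxSeq := by
            refine (ih (sizeOf t) hlt1).1 t A wA t' wA' (flatSeq cs0 ++ z1) (flatSeq ds0 ++ z2)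
              le_rfl hp hp' ?_
            simpa [flatSeq, List.append_assoc] using heq
          have htail : flatSeq cs0 ++ z1 = flatSeq ds0 ++ z2 := by
            have heq' : t.idxSeq ++ (flatSeq cs0 ++ z1) = t.idxSeq ++ (flatSeq ds0 ++ z2) := by
              simpa [flatSeq, List.append_assoc, e1] using heq
            exact List.append_cancel_left heq'
          have e2 := (ih (sizeOf cs0) hlt2).2 cs0 r0 w0 ds0 w0' z1 z2 le_rfl hseq hseq' htail
          simp [flatSeq] at e1 e2 ⊢
          rw [e1, e2]

lemma prefix_det {G : OCFG N T} {x y : PTree N T} {A w w' z1 z2}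
    (h1 : ParseFrom G A w x) (h2 : ParseFrom G A w' y)
    (heq : x.idxSeq ++ z1 = y.idxSeq ++ z2) : x.idxSeq = y.idxSeq :=
  (prefix_det_aux G (sizeOf x)).1 x A w y w' z1 z2 le_rfl h1 h2 heq

end Ocfg

namespace Ocfg
variable {N T : Type}

/-- prefix of the index sequence contributed by a context -/
def ctxPre : PCtx N T → List ℕ
  | .hole => []
  | .node _ i l c _ => i :: ((l.map PTree.idxSeq).flatten ++ ctxPre c)

/-- suffix of the index sequence contributed by a context -/
def ctxSuf : PCtx N T → List ℕ
  | .hole => []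
  | .node _ _ _ c r => ctxSuf c ++ (r.map PTree.idxSeq).flatten

lemma plug_idxSeq (c : PCtx N T) (x : PTree N T) :
    (c.plug x).idxSeq = ctxPre c ++ x.idxSeq ++ ctxSuf c := by
  induction c with
  | hole => simp [PCtx.plug, ctxPre, ctxSuf]
  | node A i l c0 r ih =>
    simp [PCtx.plug, ctxPre, ctxSuf, ih]

lemma lex_of_diff {u v1 v2 : List ℕ} {a b : ℕ} (h : a < b) :
    List.Lex (· < ·) (u ++ a :: v1) (u ++ b :: v2) := by
  induction u with
  | nil => exact List.Lex.rel h
  | cons x u ih => exact List.Lex.cons ih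

lemma lex_append_left {X Y : List ℕ} (P : List ℕ) (h : List.Lex (· < ·) X Y) :
    List.Lex (· < ·) (P ++ X) (P ++ Y) := by
  induction P with
  | nil => exact h
  | cons x P ih => exact List.Lex.cons ih

lemma lex_cancel {X Y : List ℕ} (P : List ℕ) (h : List.Lex (· < ·) (P ++ X) (P ++ Y)) :
    List.Lex (· < ·) X Y := by
  induction P with
  | nil => exact h
  | cons x P ih =>
    cases h with
    | rel h' => exact absurd h' (lt_irrefl x)
    | cons h' => exact ih h'

lemma lex_decomp {X Y : List ℕ} (h : List.Lex (· < ·) X Y) :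
    (X <+: Y ∧ X ≠ Y) ∨ ∃ u a b v1 v2, X = u ++ a :: v1 ∧ Y = u ++ b :: v2 ∧ a < b := by
  induction h with
  | nil => exact Or.inl ⟨List.nil_prefix, by simp⟩
  | @rel a l1 b l2 hab => exact Or.inr ⟨[], a, b, l1, l2, rfl, rfl, hab⟩
  | @cons a l1 l2 h ih =>
    rcases ih with ⟨hpre, hne⟩ | ⟨u, a', b', v1, v2, e1, e2, hlt⟩
    · exact Or.inl ⟨(List.prefix_cons_inj a).mpr hpre, by simpa using hne⟩
    · exact Or.inr ⟨a :: u, a', b', v1, v2, by simp [e1], by simp [e2], hlt⟩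

lemma lex_asymm {X Y : List ℕ} (h1 : List.Lex (· < ·) X Y) (h2 : List.Lex (· < ·) Y X) : False := by
  induction h1 with
  | nil => cases h2
  | @rel a l1 b l2 hab =>
    cases h2 with
    | rel h' => omega
    | cons h' => omega
  | @cons a l1 l2 h ih =>
    cases h2 with
    | rel h' => exact absurd h' (lt_irrefl a)
    | cons h' => exact ih h'

end Ocfg

namespace Ocfg
variable {N T : Type}

lemma plug_root_isSome {c : PCtx N T} {x : PTree N T} (hx : x.rootNT.isSome) :
    (c.plug x).rootNT.isSome := by
  cases c with
  | hole => exact hx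
  | node A i l c0 r => simp [PCtx.plug, PTree.rootNT]

lemma plug_ne_eps {c : PCtx N T} {x : PTree N T} (hx : x.rootNT.isSome)
    (h : c.plug x = PTree.eps) : False := by
  cases c with
  | hole => rw [PCtx.plug] at h; subst h; simp [PTree.rootNT] at hx
  | node A i l c0 r => simp [PCtx.plug] at h

/-- Exchange lemma for sequences: two parses of the same rule and yield that
differ only in one (nonterminal-rooted) position give a common nonterminal
and yield at that position, and any parse of that yield can be substituted. -/
lemma seqExch {G : OCFG N T} : ∀ (l : List (PTree N T)) {r w rr m m'},
    ParseSeq G r w (l ++ m :: rr) → ParseSeq G r w (l ++ m' :: rr) →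
    (m : PTree N T).rootNT.isSome → (m' : PTree N T).rootNT.isSome →
    ∃ B wm, ParseFrom G B wm m ∧ ParseFrom G B wm m' ∧
      ∀ y, ParseFrom G B wm y → ParseSeq G r w (l ++ y :: rr) := by
  intro l
  induction l with
  | nil =>
    intro r w rr m m' h1 h2 hm hm'
    simp only [List.nil_append] at h1 h2 ⊢
    cases h1 with
    | consTm a r0 w0 cs0 hseq =>
      simp [PTree.rootNT] at hm
    | consNt A t wA r0 w0 cs0 hp hseq =>
      generalize hW : wA ++ w0 = W at h2
      cases h2 with
      | consNt A2 t2 wA2 r2 w02 cs2 hp2 hseq2 =>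
        have hw0 : w0 = w02 := seq_det hseq hseq2
        subst hw0
        have hwA : wA = wA2 := List.append_cancel_right hW
        subst hwA
        exact ⟨A, wA, hp, hp2, fun y hy => ParseSeq.consNt A y wA r0 w0 rr hy hseq⟩
  | cons x l ih =>
    intro r w rr m m' h1 h2 hm hm'
    cases h1 with
    | consTm a r0 w0 cs0 hseq =>
      cases h2
      rename_i hseq2
      obtain ⟨B, wm, h1', h2', hrepl⟩ := ih hseq hseq2 hm hm'
      exact ⟨B, wm, h1', h2', fun y hy => ParseSeq.consTm a r0 w0 (l ++ y :: rr) (hrepl y hy)⟩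
    | consNt A t wA r0 w0 cs0 hp hseq =>
      generalize hW : wA ++ w0 = W at h2
      cases h2 with
      | consNt A2 t2 wA2 r2 w02 cs2 hp2 hseq2 =>
        have hwA : wA = wA2 := parse_det hp hp2
        subst hwA
        have hw0 : w0 = w02 := List.append_cancel_left hW
        subst hw0
        obtain ⟨B, wm, h1', h2', hrepl⟩ := ih hseq hseq2 hm hm'
        exact ⟨B, wm, h1', h2', fun y hy =>
          ParseSeq.consNt A x wA r0 w0 (l ++ y :: rr) hp (hrepl y hy)⟩

end Ocfg

namespace Ocfg
variable {N T : Type}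

lemma exch {G : OCFG N T} : ∀ (c : PCtx N T) {S w} {x x' : PTree N T},
    x.rootNT.isSome → x'.rootNT.isSome →
    ParseFrom G S w (c.plug x) → ParseFrom G S w (c.plug x') →
    ∃ A wx, ParseFrom G A wx x ∧ ParseFrom G A wx x' ∧
      ∀ y, ParseFrom G A wx y → ParseFrom G S w (c.plug y) := by
  intro c
  induction c with
  | hole =>
    intro S w x x' hx hx' h1 h2
    exact ⟨S, w, h1, h2, fun y hy => hy⟩
  | node B i l c0 r ih =>
    intro S w x x' hx hx' h1 h2
    rw [PCtx.plug] at h1 h2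
    generalize hcs : l ++ c0.plug x :: r = cs at h1
    cases h1 with
    | epsNode A1 i1 hi1 =>
      cases l with
      | nil =>
        simp at hcs
        exact absurd (plug_ne_eps hx hcs.1) id
      | cons z l' => simp at hcs
    | node A1 i1 r1 w1 cs1 hi1 hne1 hseq1 =>
      subst hcs
      generalize hcs2 : l ++ c0.plug x' :: r = cs2 at h2
      cases h2 with
      | epsNode A2 i2 hi2 =>
        cases l with
        | nil =>
          simp at hcs2
          exact absurd (plug_ne_eps hx' hcs2.1) id
        | cons z l' => simp at hcs2
      | node A2 i2 r2 w2 cs2' hi2 hne2 hseq2 =>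
        subst hcs2
        rw [hi1] at hi2
        cases hi2
        obtain ⟨B0, wm, hpx, hpx', hreplSeq⟩ :=
          seqExch l hseq1 hseq2 (plug_root_isSome hx) (plug_root_isSome hx')
        obtain ⟨A, wx, h1', h2', hrepl0⟩ := ih hx hx' hpx hpx'
        refine ⟨A, wx, h1', h2', fun y hy => ?_⟩
        rw [PCtx.plug]
        exact ParseFrom.node B i r1 w _ hi1 hne1 (hreplSeq _ (hrepl0 y hy))

end Ocfg

namespace Ocfg

lemma take_eq_of_eq {x Z u r : List ℕ} (e : x ++ Z = u ++ r) {n : ℕ}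
    (h1 : n ≤ x.length) (h2 : n ≤ u.length) : x.take n = u.take n := by
  have h := congrArg (List.take n) e
  rwa [List.take_append_of_le_length h1, List.take_append_of_le_length h2] at h

lemma split_at_diff {x Z u v : List ℕ} {b : ℕ} (e : x ++ Z = u ++ b :: v)
    (hu : u.length + 1 ≤ x.length) : x = u ++ b :: x.drop (u.length + 1) := by
  have h0 : (u ++ b :: v).take (u.length + 1) = u ++ [b] := by
    rw [List.take_append]
    simp
  have h := congrArg (List.take (u.length + 1)) e
  rw [List.take_append_of_le_length hu, h0] at h
  conv_lhs => rw [← List.take_append_drop (u.length + 1) x, h]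
  simp

lemma prefix_of_eq {x Z u r y Z' : List ℕ} (e : x ++ Z = u ++ r) (e' : y ++ Z' = u ++ r')
    (hx : x.length ≤ u.length) (hxy : x.length ≤ y.length) : x = y.take x.length := by
  have h1 : x.take x.length = u.take x.length := take_eq_of_eq e le_rfl hx
  have h2 : y.take x.length = u.take x.length := take_eq_of_eq e' hxy hx
  rw [List.take_length] at h1
  rw [h2]
  exact h1

end Ocfg



/-- The `≺_G`-least parse tree of `w` contains no cycle: it
cannot be decomposed as `c⟦c'⟦c''⟧⟧` with `c' ≠ □`, the roots of `c'` and
`c''` carrying the same nonterminal, and `c⟦c''⟧` also a parse tree of `w`. -/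
theorem stmt11 {N T : Type} (G : OCFG N T) (w : List T) (t : PTree N T)
    (hleast : IsLeastTree G w t) :
    ¬ ∃ (c c' : PCtx N T) (c'' : PTree N T) (A : N),
        c' ≠ PCtx.hole ∧
        t = c.plug (c'.plug c'') ∧
        c'.rootNT = some A ∧ c''.rootNT = some A ∧
        ParseFrom G G.start w (c.plug c'') := by
  rintro ⟨c, c', c'', A, hne, ht, hrc', hrc'', hp0⟩
  obtain ⟨hp1, hmin⟩ := hleast
  rw [ht] at hp1
  have hx'' : c''.rootNT.isSome := by rw [hrc'']; rfl
  have hxpl : (c'.plug c'').rootNT.isSome := plug_root_isSome hx''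
  obtain ⟨A0, w0, hxp, hxp', repl⟩ := exch c hxpl hx'' hp1 hp0
  obtain ⟨A1, w1, hy, -, repl'⟩ := exch c' hx'' hx'' hxp hxp
  have hA0 : A0 = A := by
    have h := root_of_parse hxp'
    rw [hrc''] at h
    exact (Option.some.inj h).symm
  subst hA0
  have hA1 : A1 = A0 := by
    have h := root_of_parse hy
    rw [hrc''] at h
    exact (Option.some.inj h).symm
  subst hA1
  have hw10 : w1 = w0 := parse_det hy hxp'
  subst hw10
  have ht2 : ParseFrom G G.start w (c.plug (c'.plug (c'.plug c''))) :=
    repl _ (repl' _ hxp)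
  have hy1 : (c'.plug c'').idxSeq = ctxPre c' ++ c''.idxSeq ++ ctxSuf c' :=
    plug_idxSeq _ _
  have hplen : 0 < (ctxPre c').length := by
    cases c' with
    | hole => exact absurd rfl hne
    | node B j l c0 r => simp [ctxPre]
  rcases hmin _ hp0 with heq | hlt
  · -- t = c.plug c'' : impossible by lengths
    have h := congrArg (fun z : PTree N T => z.idxSeq.length) (ht ▸ heq)
    simp only [plug_idxSeq, hy1, List.length_append] at h
    omega
  · have hlex : List.Lex (· < ·)
        ((ctxPre c' ++ c''.idxSeq ++ ctxSuf c') ++ ctxSuf c) (c''.idxSeq ++ ctxSuf c) := by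
      apply lex_cancel (ctxPre c)
      have h := hlt
      unfold treeLT at h
      rw [ht, plug_idxSeq c (c'.plug c''), plug_idxSeq c c'', hy1] at h
      simpa [List.append_assoc] using h
    rcases lex_decomp hlex with ⟨hpre, -⟩ | ⟨u, a, b, v1, v2, e1, e2, hab⟩
    · have h := hpre.length_le
      simp [List.length_append] at h
      omega
    · by_cases hu : u.length + 1 ≤ c''.idxSeq.length
      · -- first difference is inside c''.idxSeq
        have hy0len : c''.idxSeq.length ≤ (ctxPre c' ++ c''.idxSeq ++ ctxSuf c').length := by
          simp [List.length_append]
          omega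
        have hu1 : u.length + 1 ≤ (ctxPre c' ++ c''.idxSeq ++ ctxSuf c').length :=
          le_trans hu hy0len
        have hd0 : c''.idxSeq = u ++ b :: c''.idxSeq.drop (u.length + 1) :=
          split_at_diff e2 hu
        have hd1 : ctxPre c' ++ c''.idxSeq ++ ctxSuf c'
            = u ++ a :: (ctxPre c' ++ c''.idxSeq ++ ctxSuf c').drop (u.length + 1) :=
          split_at_diff e1 hu1
        -- t₂ ≺ t
        have goal_eq1 : (c.plug (c'.plug (c'.plug c''))).idxSeq
            = (ctxPre c ++ ctxPre c' ++ u) ++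
                a :: ((ctxPre c' ++ c''.idxSeq ++ ctxSuf c').drop (u.length + 1)
                        ++ ctxSuf c' ++ ctxSuf c) := by
          rw [plug_idxSeq c (c'.plug (c'.plug c'')), plug_idxSeq c' (c'.plug c''), hy1]
          conv_lhs => rw [hd1]
          simp [List.append_assoc]
        have goal_eq2 : t.idxSeq
            = (ctxPre c ++ ctxPre c' ++ u) ++
                b :: (c''.idxSeq.drop (u.length + 1) ++ ctxSuf c' ++ ctxSuf c) := by
          rw [ht, plug_idxSeq c (c'.plug c''), hy1]
          conv_lhs => rw [hd0]
          simp [List.append_assoc]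
        have hlex2 : treeLT (c.plug (c'.plug (c'.plug c''))) t := by
          unfold treeLT
          rw [goal_eq1, goal_eq2]
          exact lex_of_diff hab
        rcases hmin _ ht2 with heq2 | hlt2
        · -- equal: impossible by lengths
          have h := congrArg (fun z : PTree N T => z.idxSeq.length) heq2
          rw [ht] at h
          simp only [plug_idxSeq, hy1, List.length_append] at h
          omega
        · exact lex_asymm hlex2 hlt2
      · -- c''.idxSeq is a prefix of (c'.plug c'').idxSeq : contradiction with prefix_det
        push_neg at hu
        have hu' : c''.idxSeq.length ≤ u.length := by omega
        have hy1len : c''.idxSeq.length ≤ (ctxPre c' ++ c''.idxSeq ++ ctxSuf c').length := by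
          simp [List.length_append]; omega
        have hpre0 : c''.idxSeq
            = (ctxPre c' ++ c''.idxSeq ++ ctxSuf c').take c''.idxSeq.length :=
          prefix_of_eq e2 e1 hu' hy1len
        have hfeq : c''.idxSeq ++ (ctxPre c' ++ c''.idxSeq ++ ctxSuf c').drop c''.idxSeq.length
            = (c'.plug c'').idxSeq ++ [] := by
          rw [hy1, List.append_nil]
          conv_rhs =>
            rw [← List.take_append_drop c''.idxSeq.length (ctxPre c' ++ c''.idxSeq ++ ctxSuf c')]
          rw [← hpre0]
        have hdet := prefix_det hxp' hxp hfeq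
        have h := congrArg List.length hdet
        rw [hy1] at h
        simp [List.length_append] at h
        omega
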